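/- Let S_t be the shift semigroup on L²((0,1), ℂ) defined by (S_t u)(x) = u(x + t) if x + t < 1 and 0 otherwise. Then there is no constant C < 1 such that ‖S_t‖ ≤ C e^{(π/2)(1 − t)} for all t ≥ 0. In particular, since the generator of S_t satisfies r(0) = π/2, the constant e^{π/2} in Wei's bound ‖S(t)‖ ≤ e^{−r(0) t + π/2} cannot be replaced by any smaller constant. -/

import Mathlib

open MeasureTheory

/-- Lebesgue measure restricted to the interval `(0,1)`. -/
noncomputable def mu01 : Measure ℝ := volume.restrict (Set.Ioo 0 1)

/-- `S` is the left-shift semigroup on `L²((0,1), ℂ)`: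
`(S_t u)(x) = u(x + t)` if `x + t < 1`, and `0` otherwise. -/
def IsShift (S : ℝ → (Lp ℂ 2 mu01 →L[ℂ] Lp ℂ 2 mu01)) : Prop :=
  ∀ t : ℝ, 0 ≤ t → ∀ u : Lp ℂ 2 mu01, ∀ᵐ x ∂mu01,
    (S t u : ℝ → ℂ) x = if x + t < 1 then u (x + t) else 0

/-!
For `0 ≤ t < 1` the shift `S_t` maps the indicator of `(t, 1)` isometrically onto the indicator
of `(0, 1 - t)`, so `‖S_t‖ ≥ 1`. Letting `t → 1⁻`, a bound `‖S_t‖ ≤ C e^{(π/2)(1-t)}` would force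
`1 ≤ C`.
-/

open Set Filter Topology

lemma ContinuousLinearMap.one_le_opNorm_of_norm_apply_eq {𝕜 E F : Type*}
    [NontriviallyNormedField 𝕜] [NormedAddCommGroup E] [NormedSpace 𝕜 E]
    [NormedAddCommGroup F] [NormedSpace 𝕜 F] (T : E →L[𝕜] F) {u : E} (hu : u ≠ 0)
    (hTu : ‖T u‖ = ‖u‖) : 1 ≤ ‖T‖ := by
  have hle : 1 * ‖u‖ ≤ ‖T‖ * ‖u‖ := by simpa [hTu] using T.le_opNorm u
  exact le_of_mul_le_mul_right hle (norm_pos_iff.mpr hu)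

lemma mu01_Ioo {a b : ℝ} (ha : 0 ≤ a) (hb : b ≤ 1) :
    mu01 (Ioo a b) = ENNReal.ofReal (b - a) := by
  rw [mu01, Measure.restrict_apply measurableSet_Ioo,
    inter_eq_left.mpr (Ioo_subset_Ioo ha hb), Real.volume_Ioo]

lemma mu01_Ioo_ne_top {a b : ℝ} (ha : 0 ≤ a) (hb : b ≤ 1) : mu01 (Ioo a b) ≠ ⊤ := by
  rw [mu01_Ioo ha hb]
  exact ENNReal.ofReal_ne_top

noncomputable def indicatorIoo {a b : ℝ} (ha : 0 ≤ a) (hb : b ≤ 1) : Lp ℂ 2 mu01 :=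
  indicatorConstLp 2 measurableSet_Ioo (mu01_Ioo_ne_top ha hb) 1

lemma norm_indicatorIoo {a b : ℝ} (ha : 0 ≤ a) (hb : b ≤ 1) (hab : a ≤ b) :
    ‖indicatorIoo ha hb‖ = Real.sqrt (b - a) := by
  rw [indicatorIoo, norm_indicatorConstLp two_ne_zero ENNReal.ofNat_ne_top, measureReal_def,
    mu01_Ioo ha hb, ENNReal.toReal_ofReal (sub_nonneg.mpr hab), Real.sqrt_eq_rpow]
  simp

lemma IsShift.apply_indicatorIoo {S : ℝ → (Lp ℂ 2 mu01 →L[ℂ] Lp ℂ 2 mu01)} (hS : IsShift S)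
    {t : ℝ} (ht : 0 ≤ t) :
    S t (indicatorIoo ht le_rfl) = indicatorIoo le_rfl (sub_le_self 1 ht) := by
  set u := indicatorIoo ht le_rfl
  have hu : ∀ᵐ y ∂volume, y ∈ Ioo (0 : ℝ) 1 → u y = (Ioo t 1).indicator (fun _ => (1 : ℂ)) y :=
    (ae_restrict_iff' measurableSet_Ioo).mp indicatorConstLp_coeFn
  have hu_shift : ∀ᵐ x ∂mu01, x + t ∈ Ioo (0 : ℝ) 1 →
      u (x + t) = (Ioo t 1).indicator (fun _ => (1 : ℂ)) (x + t) :=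
    ae_restrict_of_ae ((eventually_add_right_iff volume t).mpr hu)
  have hmem : ∀ᵐ x ∂mu01, x ∈ Ioo (0 : ℝ) 1 := ae_restrict_mem measurableSet_Ioo
  have hv : ⇑(indicatorIoo le_rfl (sub_le_self 1 ht)) =ᵐ[mu01]
      (Ioo 0 (1 - t)).indicator fun _ => (1 : ℂ) := indicatorConstLp_coeFn
  refine Lp.ext ?_
  filter_upwards [hS t ht u, hu_shift, hmem, hv] with x hSx hux hx hvx
  rw [hSx, hvx]
  by_cases hlt : x + t < 1
  · rw [if_pos hlt, hux ⟨by linarith [hx.1], hlt⟩,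
      indicator_of_mem (show x + t ∈ Ioo t 1 from ⟨by linarith [hx.1], hlt⟩),
      indicator_of_mem (show x ∈ Ioo 0 (1 - t) from ⟨hx.1, by linarith⟩)]
  · rw [if_neg hlt, indicator_of_notMem fun hx' => hlt (by linarith [hx'.2])]

lemma IsShift.one_le_norm {S : ℝ → (Lp ℂ 2 mu01 →L[ℂ] Lp ℂ 2 mu01)} (hS : IsShift S)
    {t : ℝ} (ht : 0 ≤ t) (ht1 : t < 1) : 1 ≤ ‖S t‖ := by
  have hnorm : ‖indicatorIoo ht le_rfl‖ = Real.sqrt (1 - t) := norm_indicatorIoo _ _ ht1.le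
  refine (S t).one_le_opNorm_of_norm_apply_eq (u := indicatorIoo ht le_rfl) ?_ ?_
  · rw [← norm_pos_iff, hnorm]
    exact Real.sqrt_pos.mpr (by linarith)
  · rw [hS.apply_indicatorIoo ht, hnorm, norm_indicatorIoo _ _ (by linarith)]
    rw [sub_zero]

/-- There is no constant `C < 1` with `‖S_t‖ ≤ C e^{(π/2)(1−t)}` for all `t ≥ 0`:
Wei's constant `e^{π/2}` is optimal for the shift semigroup. -/
theorem statement9 (S : ℝ → (Lp ℂ 2 mu01 →L[ℂ] Lp ℂ 2 mu01)) (hS : IsShift S) :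
    ¬ ∃ C : ℝ, C < 1 ∧ ∀ t : ℝ, 0 ≤ t →
      ‖S t‖ ≤ C * Real.exp (Real.pi / 2 * (1 - t)) := by
  rintro ⟨C, hC, hbound⟩
  have hlim : Tendsto (fun t => C * Real.exp (Real.pi / 2 * (1 - t))) (𝓝[<] 1) (𝓝 C) := by
    have hcont : Continuous fun t : ℝ => C * Real.exp (Real.pi / 2 * (1 - t)) := by fun_prop
    simpa using (hcont.tendsto 1).mono_left nhdsWithin_le_nhds
  obtain ⟨t, hlt, ht⟩ :=
    ((hlim.eventually (gt_mem_nhds hC)).and (Ioo_mem_nhdsLT zero_lt_one)).exists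
  linarith [hS.one_le_norm ht.1.le ht.2, hbound t ht.1.le]
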